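/- arXiv:2206.00896 — 5 statements merged into one kernel-verified Lean document; each statement's English description precedes it below -/
import Mathlib

section
/- Let F be a field and let a, b, c, d, s, z, omega, w be elements of F with c*omega + d ≠ 0 and c*w + d ≠ 0. Write gamma(u) = (a*u + b)/(c*u + d) for the fractional linear transformation attached to the matrix gamma = [[a,b],[c,d]]. If s ≠ gamma(w) and z ≠ gamma(omega), then ((s - gamma(omega))*(z - gamma(w))) / ((s - gamma(w))*(z - gamma(omega))) = 1 + ((z - s)*(w - omega)*(a*d - b*c)) / ((s - gamma(w))*(z - gamma(omega))*(c*omega + d)*(c*w + d)). (This is Lemma 5.2 of the paper, where w = alpha*omega.) -/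
private lemma aux52 {F : Type*} [Field F] (P1 P2 P3 P4 N Dω Dw : F)
    (hω : Dω ≠ 0) (hw : Dw ≠ 0) (h3 : P3 ≠ 0) (h4 : P4 ≠ 0)
    (key : P1 * P2 = P3 * P4 + N) :
    ((P1 / Dω) * (P2 / Dw)) / ((P3 / Dw) * (P4 / Dω))
      = 1 + N / (((P3 / Dw) * (P4 / Dω)) * Dω * Dw) := by
  field_simp
  linear_combination key

/-- **Lemma 5.2.** For a field `F` and a matrix `γ = [[a,b],[c,d]]` acting by fractional
linear transformations `γ u = (a*u+b)/(c*u+d)`, if `c*ω+d ≠ 0`, `c*w+d ≠ 0`,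
`s ≠ γ w` and `z ≠ γ ω`, then
`((s - γω)(z - γw)) / ((s - γw)(z - γω))
  = 1 + ((z-s)(w-ω)(ad-bc)) / ((s - γw)(z - γω)(cω+d)(cw+d))`. -/
theorem lemma52_fractional_linear_identity {F : Type*} [Field F]
    (a b c d s z ω w : F) (hω : c * ω + d ≠ 0) (hw : c * w + d ≠ 0)
    (hs : s ≠ (a * w + b) / (c * w + d)) (hz : z ≠ (a * ω + b) / (c * ω + d)) :
    ((s - (a * ω + b) / (c * ω + d)) * (z - (a * w + b) / (c * w + d))) /
        ((s - (a * w + b) / (c * w + d)) * (z - (a * ω + b) / (c * ω + d)))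
      = 1 + ((z - s) * (w - ω) * (a * d - b * c)) /
          ((s - (a * w + b) / (c * w + d)) * (z - (a * ω + b) / (c * ω + d)) *
            (c * ω + d) * (c * w + d)) := by
  have e1 : s - (a * ω + b) / (c * ω + d) = (s * (c * ω + d) - (a * ω + b)) / (c * ω + d) := by
    rw [sub_div, mul_div_cancel_right₀ _ hω]
  have e2 : z - (a * w + b) / (c * w + d) = (z * (c * w + d) - (a * w + b)) / (c * w + d) := by
    rw [sub_div, mul_div_cancel_right₀ _ hw]
  have e3 : s - (a * w + b) / (c * w + d) = (s * (c * w + d) - (a * w + b)) / (c * w + d) := by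
    rw [sub_div, mul_div_cancel_right₀ _ hw]
  have e4 : z - (a * ω + b) / (c * ω + d) = (z * (c * ω + d) - (a * ω + b)) / (c * ω + d) := by
    rw [sub_div, mul_div_cancel_right₀ _ hω]
  have h1 : s - (a * w + b) / (c * w + d) ≠ 0 := sub_ne_zero.mpr hs
  have h2 : z - (a * ω + b) / (c * ω + d) ≠ 0 := sub_ne_zero.mpr hz
  rw [e3] at h1
  rw [e4] at h2
  have n3 : s * (c * w + d) - (a * w + b) ≠ 0 := (div_ne_zero_iff.mp h1).1
  have n4 : z * (c * ω + d) - (a * ω + b) ≠ 0 := (div_ne_zero_iff.mp h2).1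
  rw [e1, e2, e3, e4]
  exact aux52 _ _ _ _ _ _ _ hω hw n3 n4 (by ring)
end

section
/- Let omega in C satisfy |omega| = |omega|_i and |omega| not in q^Z (i.e. |omega| is not an integral power of q). Then: (i) for all c, d in K_inf not both zero, |c*omega + d| = max(|c*omega|, |d|); (ii) for every gamma = [[a,b],[c,d]] in GL_2(A), |gamma omega|_i = |omega|_i / |c*omega + d|^2 and |gamma omega|_i is not an integral power of q; in particular |gamma omega|_i ≠ q^{-n} for every natural number n. -/
open Polynomial
open scoped Classical

/-- The absolute value on `K_∞ = F_q((π))`: `|x| = q^{-v_∞(x)}`. -/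
noncomputable def absK (Fq : Type*) [Field Fq] [Fintype Fq] (x : LaurentSeries Fq) : ℝ :=
  if x = 0 then 0 else (Fintype.card Fq : ℝ) ^ (-(HahnSeries.order x))

/-- The imaginary part `|z|_i = inf {|z - x| : x ∈ K_∞}` of an element of `C`. -/
noncomputable def imNorm (Fq : Type*) [Field Fq] {C : Type*} [NormedField C]
    [Algebra (LaurentSeries Fq) C] (z : C) : ℝ :=
  ⨅ x : LaurentSeries Fq, ‖z - algebraMap (LaurentSeries Fq) C x‖

/-- The element `T = π⁻¹` of `K_∞ = F_q((π))`. -/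
noncomputable def Tel (Fq : Type*) [Field Fq] : LaurentSeries Fq :=
  HahnSeries.single (-1 : ℤ) 1

/-- The embedding `A = F_q[T] → C`, sending `T` to `π⁻¹`. -/
noncomputable def polyEmb (Fq : Type*) [Field Fq] (C : Type*) [NormedField C]
    [Algebra (LaurentSeries Fq) C] : Polynomial Fq →+* C :=
  (algebraMap (LaurentSeries Fq) C).comp (Polynomial.aeval (Tel Fq)).toRingHom

section Aux

variable {Fq : Type*} [Field Fq] [Fintype Fq] {C : Type*} [NormedField C]
  [Algebra (LaurentSeries Fq) C]

lemma aux_bdd (z : C) :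
    BddBelow (Set.range fun x : LaurentSeries Fq => ‖z - algebraMap (LaurentSeries Fq) C x‖) :=
  ⟨0, by rintro r ⟨x, rfl⟩; exact norm_nonneg _⟩

lemma aux_imNorm_le (z : C) (x : LaurentSeries Fq) :
    imNorm Fq z ≤ ‖z - algebraMap (LaurentSeries Fq) C x‖ :=
  ciInf_le (aux_bdd z) x

lemma aux_imNorm_nonneg (z : C) : 0 ≤ imNorm Fq z :=
  le_ciInf fun _ => norm_nonneg _

lemma aux_imNorm_emb (y : LaurentSeries Fq) :
    imNorm Fq (algebraMap (LaurentSeries Fq) C y) = 0 := by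
  refine le_antisymm ?_ (aux_imNorm_nonneg _)
  simpa using aux_imNorm_le (algebraMap (LaurentSeries Fq) C y) y

lemma aux_ultra (hna : ∀ x y : C, ‖x + y‖ ≤ max ‖x‖ ‖y‖) {x y : C}
    (h : ‖x‖ ≠ ‖y‖) : ‖x + y‖ = max ‖x‖ ‖y‖ := by
  rcases h.lt_or_gt with h' | h'
  · -- ‖x‖ < ‖y‖, max = ‖y‖
    rw [max_eq_right h'.le]
    refine le_antisymm (le_trans (hna x y) (max_le h'.le le_rfl)) ?_
    have : ‖y‖ ≤ max ‖x + y‖ ‖x‖ := by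
      calc ‖y‖ = ‖x + y + -x‖ := by ring_nf
        _ ≤ max ‖x + y‖ ‖-x‖ := hna _ _
        _ = max ‖x + y‖ ‖x‖ := by rw [norm_neg]
    rcases max_cases ‖x + y‖ ‖x‖ with ⟨he, _⟩ | ⟨he, _⟩
    · rwa [he] at this
    · rw [he] at this; exact absurd this (not_le.mpr h')
  · rw [max_eq_left h'.le]
    refine le_antisymm (le_trans (hna x y) (max_le le_rfl h'.le)) ?_
    have : ‖x‖ ≤ max ‖x + y‖ ‖y‖ := by
      calc ‖x‖ = ‖x + y + -y‖ := by ring_nf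
        _ ≤ max ‖x + y‖ ‖-y‖ := hna _ _
        _ = max ‖x + y‖ ‖y‖ := by rw [norm_neg]
    rcases max_cases ‖x + y‖ ‖y‖ with ⟨he, _⟩ | ⟨he, _⟩
    · rwa [he] at this
    · rw [he] at this; exact absurd this (not_le.mpr h')

lemma aux_norm_u (u : Fq) (hu : u ≠ 0) :
    ‖algebraMap (LaurentSeries Fq) C (algebraMap Fq (LaurentSeries Fq) u)‖ = 1 := by
  set n := Fintype.card Fq - 1 with hn
  have hn0 : n ≠ 0 := by
    have := Fintype.one_lt_card (α := Fq)
    omega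
  have hnorm : ‖algebraMap (LaurentSeries Fq) C (algebraMap Fq (LaurentSeries Fq) u)‖ ^ n = 1 := by
    rw [← norm_pow, ← map_pow, ← map_pow, FiniteField.pow_card_sub_one_eq_one u hu, map_one,
      map_one, norm_one]
  set x := ‖algebraMap (LaurentSeries Fq) C (algebraMap Fq (LaurentSeries Fq) u)‖ with hx
  have hx0 : 0 ≤ x := norm_nonneg _
  rcases lt_trichotomy x 1 with h | h | h
  · exact absurd (hnorm ▸ pow_lt_one₀ hx0 h hn0) (lt_irrefl 1)
  · exact h
  · exact absurd (hnorm ▸ one_lt_pow₀ h hn0) (lt_irrefl 1)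

end Aux

set_option maxHeartbeats 1000000 in
/-- Let `ω ∈ C` satisfy `|ω| = |ω|_i` and `|ω| ∉ q^ℤ`.  Then:
(i) for `c, d ∈ K_∞` not both zero, `|c·ω + d| = max (|c·ω|, |d|)`;
(ii) for every `γ = [[a,b],[c,d]] ∈ GL₂(A)` (entries in `A = F_q[T]`, determinant a
nonzero constant `u ∈ F_q^×`), `|γ ω|_i = |ω|_i / |c·ω + d|²`, and `|γ ω|_i` is not an
integral power of `q`; in particular `|γ ω|_i ≠ q^{-n}` for every natural number `n`. -/
theorem imNorm_omega_irrational {Fq : Type*} [Field Fq] [Fintype Fq]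
    {C : Type*} [NormedField C] [Algebra (LaurentSeries Fq) C]
    (hna : ∀ x y : C, ‖x + y‖ ≤ max ‖x‖ ‖y‖)
    (hext : ∀ x : LaurentSeries Fq, ‖algebraMap (LaurentSeries Fq) C x‖ = absK Fq x)
    (ω : C) (hωi : ‖ω‖ = imNorm Fq ω)
    (hirr : ∀ m : ℤ, ‖ω‖ ≠ (Fintype.card Fq : ℝ) ^ m) :
    (∀ c d : LaurentSeries Fq, (c ≠ 0 ∨ d ≠ 0) →
      ‖algebraMap (LaurentSeries Fq) C c * ω + algebraMap (LaurentSeries Fq) C d‖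
        = max ‖algebraMap (LaurentSeries Fq) C c * ω‖ ‖algebraMap (LaurentSeries Fq) C d‖) ∧
    (∀ (a b c d : Polynomial Fq) (u : Fq), u ≠ 0 → a * d - b * c = Polynomial.C u →
      imNorm Fq ((polyEmb Fq C a * ω + polyEmb Fq C b) /
          (polyEmb Fq C c * ω + polyEmb Fq C d))
        = imNorm Fq ω / ‖polyEmb Fq C c * ω + polyEmb Fq C d‖ ^ 2 ∧
      (∀ m : ℤ, imNorm Fq ((polyEmb Fq C a * ω + polyEmb Fq C b) /
          (polyEmb Fq C c * ω + polyEmb Fq C d)) ≠ (Fintype.card Fq : ℝ) ^ m) ∧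
      (∀ n : ℕ, imNorm Fq ((polyEmb Fq C a * ω + polyEmb Fq C b) /
          (polyEmb Fq C c * ω + polyEmb Fq C d)) ≠ (Fintype.card Fq : ℝ) ^ (-(n : ℤ)))) := by
  classical
  set q : ℝ := (Fintype.card Fq : ℝ) with hqdef
  have hq1 : (1 : ℝ) < q := by
    rw [hqdef]; exact_mod_cast Fintype.one_lt_card
  have hq0 : (0 : ℝ) < q := lt_trans one_pos hq1
  set e := algebraMap (LaurentSeries Fq) C with he
  have hnz : ∀ x : LaurentSeries Fq, x ≠ 0 → ‖e x‖ = q ^ (-(HahnSeries.order x)) := by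
    intro x hx
    rw [he, hext, absK, if_neg hx]
  have hepos : ∀ x : LaurentSeries Fq, x ≠ 0 → 0 < ‖e x‖ := by
    intro x hx
    rw [hnz x hx]
    exact zpow_pos hq0 _
  have hzpow : ∀ x : LaurentSeries Fq, x ≠ 0 → ∃ m : ℤ, ‖e x‖ = q ^ m :=
    fun x hx => ⟨-(HahnSeries.order x), hnz x hx⟩
  have hene : ∀ x : LaurentSeries Fq, x ≠ 0 → e x ≠ 0 := by
    intro x hx
    exact norm_pos_iff.mp (hepos x hx)
  -- part (i)
  have key : ∀ c d : LaurentSeries Fq, (c ≠ 0 ∨ d ≠ 0) →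
      ‖e c * ω + e d‖ = max ‖e c * ω‖ ‖e d‖ := by
    intro c d _
    by_cases hω0 : ω = 0
    · simp [hω0]
    by_cases hc : c = 0
    · simp [hc]
    have hW : 0 < ‖ω‖ := norm_pos_iff.mpr hω0
    refine aux_ultra hna ?_
    rw [norm_mul]
    by_cases hd : d = 0
    · rw [hd, map_zero, norm_zero]
      exact (mul_pos (hepos c hc) hW).ne'
    obtain ⟨m, hm⟩ := hzpow c hc
    obtain ⟨n, hn⟩ := hzpow d hd
    intro hcon
    apply hirr (n - m)
    rw [hm, hn] at hcon
    rw [zpow_sub₀ hq0.ne', ← hcon, mul_comm, mul_div_assoc,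
      div_self (zpow_ne_zero m hq0.ne'), mul_one]
  refine ⟨key, ?_⟩
  intro a b c d u hu hdet
  set a' := Polynomial.aeval (Tel Fq) a with ha'
  set b' := Polynomial.aeval (Tel Fq) b with hb'
  set c' := Polynomial.aeval (Tel Fq) c with hc'
  set d' := Polynomial.aeval (Tel Fq) d with hd'
  set u' := algebraMap Fq (LaurentSeries Fq) u with hu'def
  have hu'0 : u' ≠ 0 := by
    intro h
    exact hu ((algebraMap Fq (LaurentSeries Fq)).injective (by rw [map_zero]; exact h))
  have hdet' : a' * d' - b' * c' = u' := by
    have := congrArg (Polynomial.aeval (Tel Fq)) hdet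
    simpa [ha', hb', hc', hd', hu'def, Polynomial.aeval_C] using this
  have hpa : polyEmb Fq C a = e a' := rfl
  have hpb : polyEmb Fq C b = e b' := rfl
  have hpc : polyEmb Fq C c = e c' := rfl
  have hpd : polyEmb Fq C d = e d' := rfl
  rw [hpa, hpb, hpc, hpd]
  have hu'norm : ‖e u'‖ = 1 := aux_norm_u u hu
  have hdetC : e a' * e d' - e b' * e c' = e u' := by
    have h2 := congrArg e hdet'
    rw [map_sub, map_mul, map_mul] at h2
    exact h2
  have hcd : ¬(c' = 0 ∧ d' = 0) := by
    rintro ⟨h1, h2⟩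
    rw [h1, h2] at hdet'
    simp at hdet'
    exact hu'0 hdet'.symm
  by_cases hω0 : ω = 0
  · -- trivial case ω = 0
    have him0 : imNorm Fq ω = 0 := by
      rw [hω0, show (0 : C) = e 0 by rw [map_zero]]
      exact aux_imNorm_emb 0
    have hexpr : imNorm Fq ((e a' * ω + e b') / (e c' * ω + e d')) = 0 := by
      rw [hω0, mul_zero, zero_add, mul_zero, zero_add]
      by_cases hd0 : d' = 0
      · rw [hd0, map_zero, div_zero, show (0 : C) = e 0 by rw [map_zero]]
        exact aux_imNorm_emb 0
      · rw [show e b' / e d' = e (b' * d'⁻¹) by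
          rw [map_mul, map_inv₀, div_eq_mul_inv]]
        exact aux_imNorm_emb _
    refine ⟨by rw [hexpr, him0, zero_div], fun m hm => ?_, fun n hn => ?_⟩
    · rw [hexpr] at hm; exact (zpow_pos hq0 m).ne' hm.symm
    · rw [hexpr] at hn; exact (zpow_pos hq0 (-(n:ℤ))).ne' hn.symm
  have hW : 0 < ‖ω‖ := norm_pos_iff.mpr hω0
  set W := ‖ω‖ with hWdef
  set j := e c' * ω + e d' with hjdef
  have hcdor : c' ≠ 0 ∨ d' ≠ 0 := by
    by_contra h
    push_neg at h
    exact hcd ⟨h.1, h.2⟩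
  have hJ : ‖j‖ = max (‖e c'‖ * W) ‖e d'‖ := by
    rw [hjdef, key c' d' hcdor, norm_mul]
  have hJpos : 0 < ‖j‖ := by
    rw [hJ]
    rcases hcdor with h | h
    · exact lt_max_of_lt_left (mul_pos (hepos c' h) hW)
    · exact lt_max_of_lt_right (hepos d' h)
  have hj0 : j ≠ 0 := norm_pos_iff.mp hJpos
  -- middle case of trichotomy is impossible
  have htri : ‖e c'‖ * W ≠ ‖e d'‖ := by
    intro hcon
    by_cases hc0 : c' = 0
    · rw [hc0, map_zero, norm_zero, zero_mul] at hcon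
      have hd0 : d' = 0 := by
        by_contra hd0
        exact (hepos d' hd0).ne' hcon.symm
      exact hcd ⟨hc0, hd0⟩
    · have hd0 : d' ≠ 0 := by
        intro hd0
        rw [hd0, map_zero, norm_zero] at hcon
        exact (mul_pos (hepos c' hc0) hW).ne' hcon
      obtain ⟨m, hm⟩ := hzpow c' hc0
      obtain ⟨n, hn⟩ := hzpow d' hd0
      apply hirr (n - m)
      rw [hm, hn] at hcon
      rw [zpow_sub₀ hq0.ne', ← hcon, mul_comm, mul_div_assoc,
        div_self (zpow_ne_zero m hq0.ne'), mul_one]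
  -- lower bound
  have hlow : W / ‖j‖ ^ 2 ≤ imNorm Fq ((e a' * ω + e b') / j) := by
    rw [imNorm]
    refine le_ciInf fun x => ?_
    have hsub : (e a' * ω + e b') / j - e x
        = (e (a' - x * c') * ω + e (b' - x * d')) / j := by
      rw [map_sub, map_mul, map_sub, map_mul, eq_div_iff hj0, sub_mul,
        div_mul_cancel₀ _ hj0, hjdef]
      ring
    have hdet2 : (a' - x * c') * d' - (b' - x * d') * c' = u' := by
      rw [← hdet']; ring
    have hnb : a' - x * c' ≠ 0 ∨ b' - x * d' ≠ 0 := by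
      by_contra h
      push_neg at h
      rw [h.1, h.2] at hdet2
      simp at hdet2
      exact hu'0 hdet2.symm
    have hnum : ‖e (a' - x * c') * ω + e (b' - x * d')‖
        = max (‖e (a' - x * c')‖ * W) ‖e (b' - x * d')‖ := by
      rw [key _ _ hnb, norm_mul]
    set A1 := ‖e (a' - x * c')‖ with hA1
    set B1 := ‖e (b' - x * d')‖ with hB1
    set Cn := ‖e c'‖ with hCn
    set Dn := ‖e d'‖ with hDn
    have hA1nn : 0 ≤ A1 := norm_nonneg _
    have hB1nn : 0 ≤ B1 := norm_nonneg _
    have hdetineq : 1 ≤ max (A1 * Dn) (B1 * Cn) := by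
      have h1 : ‖e ((a' - x * c') * d') + -(e ((b' - x * d') * c'))‖ = 1 := by
        rw [← map_neg, ← map_add, show (a' - x * c') * d' + -((b' - x * d') * c')
          = (a' - x * c') * d' - (b' - x * d') * c' by ring, hdet2, hu'norm]
      calc (1 : ℝ) = ‖e ((a' - x * c') * d') + -(e ((b' - x * d') * c'))‖ := h1.symm
        _ ≤ max ‖e ((a' - x * c') * d')‖ ‖-(e ((b' - x * d') * c'))‖ := hna _ _
        _ = max (A1 * Dn) (B1 * Cn) := by
            rw [norm_neg, map_mul, map_mul, norm_mul, norm_mul]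
    have hDnJ : Dn ≤ ‖j‖ := by rw [hJ]; exact le_max_right _ _
    have hCnWJ : Cn * W ≤ ‖j‖ := by rw [hJ]; exact le_max_left _ _
    rw [hsub, norm_div, hnum]
    have hgoal : W / ‖j‖ ≤ max (A1 * W) B1 := by
      rcases le_max_iff.mp hdetineq with h1 | h2
      · refine le_trans ?_ (le_max_left _ _)
        rw [div_le_iff₀ hJpos]
        have h3 : 1 ≤ A1 * ‖j‖ := le_trans h1 (mul_le_mul_of_nonneg_left hDnJ hA1nn)
        calc W = W * 1 := (mul_one W).symm
          _ ≤ W * (A1 * ‖j‖) := mul_le_mul_of_nonneg_left h3 hW.le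
          _ = A1 * W * ‖j‖ := by ring
      · refine le_trans ?_ (le_max_right _ _)
        rw [div_le_iff₀ hJpos]
        have h3 : B1 * (Cn * W) ≤ B1 * ‖j‖ := mul_le_mul_of_nonneg_left hCnWJ hB1nn
        calc W = 1 * W := (one_mul W).symm
          _ ≤ (B1 * Cn) * W := mul_le_mul_of_nonneg_right h2 hW.le
          _ = B1 * (Cn * W) := by ring
          _ ≤ B1 * ‖j‖ := h3
    calc W / ‖j‖ ^ 2 = (W / ‖j‖) / ‖j‖ := by rw [sq, ← div_div]
      _ ≤ max (A1 * W) B1 / ‖j‖ := by gcongr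
  -- upper bound together with the power-of-q shape of W / ‖j‖²
  have hup : imNorm Fq ((e a' * ω + e b') / j) ≤ W / ‖j‖ ^ 2 ∧
      ((∃ k : ℤ, W / ‖j‖ ^ 2 = q ^ k * W) ∨ (∃ k : ℤ, (W / ‖j‖ ^ 2) * W = q ^ k)) := by
    rcases htri.lt_or_gt with hlt | hgt
    · -- ‖e c'‖ * W < ‖e d'‖ : here ‖j‖ = ‖e d'‖
      have hd0 : d' ≠ 0 := by
        intro h
        rw [h, map_zero, norm_zero] at hlt
        exact absurd hlt (not_lt.mpr (mul_nonneg (norm_nonneg _) hW.le))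
      have hJd : ‖j‖ = ‖e d'‖ := by rw [hJ]; exact max_eq_right hlt.le
      have hDd : e d' ≠ 0 := hene d' hd0
      have hx0 : e (b' * d'⁻¹) = e b' / e d' := by rw [map_mul, map_inv₀, div_eq_mul_inv]
      have hsub : (e a' * ω + e b') / j - e (b' * d'⁻¹) = (e u' * ω) / (j * e d') := by
        rw [hx0, div_sub_div _ _ hj0 hDd, hjdef]
        congr 1
        linear_combination ω * hdetC
      have hnorm : ‖(e a' * ω + e b') / j - e (b' * d'⁻¹)‖ = W / ‖j‖ ^ 2 := by
        rw [hsub, norm_div, norm_mul, norm_mul, hu'norm, one_mul, ← hJd, sq]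
      refine ⟨le_of_le_of_eq (aux_imNorm_le _ _) hnorm, Or.inl ?_⟩
      obtain ⟨n, hn⟩ := hzpow d' hd0
      refine ⟨-(n + n), ?_⟩
      rw [hJd, hn, sq, ← zpow_add₀ hq0.ne', zpow_neg, div_eq_mul_inv, mul_comm]
    · -- ‖e d'‖ < ‖e c'‖ * W : here ‖j‖ = ‖e c'‖ * W
      have hc0 : c' ≠ 0 := by
        intro h
        rw [h, map_zero, norm_zero, zero_mul] at hgt
        exact absurd hgt (not_lt.mpr (norm_nonneg _))
      have hJc : ‖j‖ = ‖e c'‖ * W := by rw [hJ]; exact max_eq_left hgt.le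
      have hCc : e c' ≠ 0 := hene c' hc0
      have hx0 : e (a' * c'⁻¹) = e a' / e c' := by rw [map_mul, map_inv₀, div_eq_mul_inv]
      have hsub : (e a' * ω + e b') / j - e (a' * c'⁻¹) = (-(e u')) / (j * e c') := by
        rw [hx0, div_sub_div _ _ hj0 hCc, hjdef]
        congr 1
        linear_combination -hdetC
      have hnorm : ‖(e a' * ω + e b') / j - e (a' * c'⁻¹)‖ = W / ‖j‖ ^ 2 := by
        have hCp : 0 < ‖e c'‖ := hepos c' hc0
        rw [hsub, norm_div, norm_neg, hu'norm, norm_mul, sq, hJc]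
        rw [div_eq_div_iff (mul_pos (mul_pos hCp hW) hCp).ne'
          (mul_pos (mul_pos hCp hW) (mul_pos hCp hW)).ne']
        ring
      refine ⟨le_of_le_of_eq (aux_imNorm_le _ _) hnorm, Or.inr ?_⟩
      obtain ⟨n, hn⟩ := hzpow c' hc0
      refine ⟨-(n + n), ?_⟩
      have hqn : (q : ℝ) ^ n ≠ 0 := (zpow_pos hq0 n).ne'
      have hWne : W ≠ 0 := hW.ne'
      have hqe : q ^ (-(n + n)) = (q ^ n * q ^ n)⁻¹ := by
        rw [← zpow_add₀ hq0.ne', zpow_neg]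
      rw [hJc, hn, hqe, sq]
      field_simp
  have main : imNorm Fq ((e a' * ω + e b') / j) = W / ‖j‖ ^ 2 := le_antisymm hup.1 hlow
  have hne2 : ∀ m : ℤ, imNorm Fq ((e a' * ω + e b') / j) ≠ q ^ m := by
    intro m hm
    rw [main] at hm
    rcases hup.2 with ⟨k, hk⟩ | ⟨k, hk⟩
    · rw [hk] at hm
      apply hirr (m - k)
      rw [zpow_sub₀ hq0.ne', ← hm, mul_comm, mul_div_assoc,
        div_self (zpow_ne_zero k hq0.ne'), mul_one]
    · rw [hm] at hk
      apply hirr (k - m)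
      rw [zpow_sub₀ hq0.ne', ← hk, mul_comm, mul_div_assoc,
        div_self (zpow_ne_zero m hq0.ne'), mul_one]
  exact ⟨by rw [main, ← hωi], hne2, fun n => hne2 (-(n : ℤ))⟩
end

section
/- Let Gamma be a subgroup of GL_2(A), alpha in Gamma, omega in C with |omega|_i > 0, and s in K. Suppose kappa' > 0 is a constant such that |s - gamma(alpha omega)| >= kappa' / |c*(alpha omega) + d| for every gamma = [[a,b],[c,d]] in Gamma. Then for every gamma = [[a,b],[c,d]] in Gamma and every z in C with z ≠ gamma omega, one has |F_{gamma,s}(z) - 1| <= (|z - s| * |alpha omega - omega|) / (kappa' * |z - gamma omega| * |c*omega + d|). (This is inequality (5.4) of the paper; note |det gamma| = 1 since det gamma is in F_q^x.) -/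
open Polynomial Matrix
open scoped Classical

/-- The action of `γ ∈ GL₂(A)` on `C` by fractional linear transformations. -/
noncomputable def act {Fq : Type*} [Field Fq] {C : Type*} [NormedField C]
    [Algebra (LaurentSeries Fq) C] (g : GL (Fin 2) (Polynomial Fq)) (z : C) : C :=
  (polyEmb Fq C (g.val 0 0) * z + polyEmb Fq C (g.val 0 1)) /
    (polyEmb Fq C (g.val 1 0) * z + polyEmb Fq C (g.val 1 1))

set_option linter.unusedSectionVars false

section Aux
variable {Fq : Type*} [Field Fq] [Fintype Fq]
  {C : Type*} [NormedField C] [Algebra (LaurentSeries Fq) C]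

lemma aeval_Tel_coeff (p : Polynomial Fq) (n : ℕ) :
    (Polynomial.aeval (Tel Fq) p : LaurentSeries Fq).coeff (-(n : ℤ)) = p.coeff n := by
  induction p using Polynomial.induction_on' with
  | add p q hp hq => simp [hp, hq]
  | monomial e a =>
    rw [Polynomial.aeval_monomial]
    have h1 : (Tel Fq) ^ e = HahnSeries.single (-(e : ℤ)) 1 := by
      rw [Tel, HahnSeries.single_pow]; simp
    have h2 : algebraMap Fq (LaurentSeries Fq) a = HahnSeries.single (0 : ℤ) a := by
      rw [HahnSeries.algebraMap_apply']
      show HahnSeries.ofPowerSeries ℤ Fq (PowerSeries.C a) = _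
      rw [HahnSeries.ofPowerSeries_C, HahnSeries.C_apply]
    rw [h1, h2, HahnSeries.single_mul_single, zero_add, mul_one,
      Polynomial.coeff_monomial, HahnSeries.coeff_single]
    by_cases h : e = n
    · simp [h]
    · have : -(n:ℤ) ≠ -(e:ℤ) := by simpa using fun hh => h (by exact_mod_cast hh.symm)
      simp [h, this]

lemma aeval_Tel_ne {p : Polynomial Fq} (hp : p ≠ 0) :
    Polynomial.aeval (Tel Fq) p ≠ (0 : LaurentSeries Fq) := by
  intro h
  have h2 := aeval_Tel_coeff p p.natDegree
  rw [h] at h2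
  simp only [HahnSeries.coeff_zero] at h2
  exact hp (Polynomial.leadingCoeff_eq_zero.mp h2.symm)

lemma polyEmb_ne (hext : ∀ x : LaurentSeries Fq, ‖algebraMap (LaurentSeries Fq) C x‖ = absK Fq x)
    {p : Polynomial Fq} (hp : p ≠ 0) : polyEmb Fq C p ≠ 0 := by
  have h1 : Polynomial.aeval (Tel Fq) p ≠ (0 : LaurentSeries Fq) := aeval_Tel_ne hp
  show algebraMap (LaurentSeries Fq) C (Polynomial.aeval (Tel Fq) p) ≠ 0
  intro h
  have h2 := hext (Polynomial.aeval (Tel Fq) p)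
  rw [h, norm_zero, absK, if_neg h1] at h2
  have hpos : (0:ℝ) < (Fintype.card Fq : ℝ) ^ (-(Polynomial.aeval (Tel Fq) p : LaurentSeries Fq).order) := by
    apply zpow_pos
    exact_mod_cast Fintype.card_pos
  rw [← h2] at hpos
  exact lt_irrefl _ hpos

lemma norm_polyEmb_eq (hext : ∀ x : LaurentSeries Fq, ‖algebraMap (LaurentSeries Fq) C x‖ = absK Fq x)
    (p : Polynomial Fq) : ‖polyEmb Fq C p‖ = absK Fq (Polynomial.aeval (Tel Fq) p) :=
  hext _

lemma imNorm_nonpos_of_mem_range {z : C}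
    (hz : z ∈ Set.range (algebraMap (LaurentSeries Fq) C)) : imNorm Fq z ≤ 0 := by
  obtain ⟨x, rfl⟩ := hz
  have h : imNorm Fq (algebraMap (LaurentSeries Fq) C x)
      ≤ ‖algebraMap (LaurentSeries Fq) C x - algebraMap (LaurentSeries Fq) C x‖ :=
    ciInf_le ⟨0, by rintro _ ⟨y, rfl⟩; positivity⟩ x
  simpa using h

lemma det_isUnit (g : GL (Fin 2) (Polynomial Fq)) : IsUnit (g.val.det) :=
  (Matrix.isUnit_iff_isUnit_det _).mp g.isUnit

lemma denom_ne (hext : ∀ x : LaurentSeries Fq, ‖algebraMap (LaurentSeries Fq) C x‖ = absK Fq x)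
    (g : GL (Fin 2) (Polynomial Fq)) {z : C}
    (hz : z ∉ Set.range (algebraMap (LaurentSeries Fq) C)) :
    polyEmb Fq C (g.val 1 0) * z + polyEmb Fq C (g.val 1 1) ≠ 0 := by
  have hdet := det_isUnit g
  rw [Matrix.det_fin_two] at hdet
  by_cases hc : g.val 1 0 = 0
  · have hd : g.val 1 1 ≠ 0 := by
      intro h
      rw [hc, h] at hdet
      simp at hdet
    rw [hc]
    simpa using polyEmb_ne hext hd
  · intro h
    apply hz
    have hcC : polyEmb Fq C (g.val 1 0) ≠ 0 := polyEmb_ne hext hc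
    refine ⟨-(Polynomial.aeval (Tel Fq) (g.val 1 1)) / (Polynomial.aeval (Tel Fq) (g.val 1 0)), ?_⟩
    rw [map_div₀, map_neg]
    show -(polyEmb Fq C (g.val 1 1)) / (polyEmb Fq C (g.val 1 0)) = z
    rw [div_eq_iff hcC]
    linear_combination -h

lemma notMem_range_of_imNorm_pos {z : C} (hz : 0 < imNorm Fq z) :
    z ∉ Set.range (algebraMap (LaurentSeries Fq) C) := fun h =>
  absurd (imNorm_nonpos_of_mem_range h) (not_le.mpr hz)

lemma act_notMem_range (hext : ∀ x : LaurentSeries Fq, ‖algebraMap (LaurentSeries Fq) C x‖ = absK Fq x)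
    (g : GL (Fin 2) (Polynomial Fq)) {z : C} (hz : 0 < imNorm Fq z) :
    act g z ∉ Set.range (algebraMap (LaurentSeries Fq) C) := by
  have hzr := notMem_range_of_imNorm_pos (Fq := Fq) (C := C) hz
  have hden := denom_ne hext g hzr
  rintro ⟨x, hx⟩
  rw [act, eq_div_iff hden] at hx
  -- hx : x * (c z + d) = a z + b
  by_cases hac : polyEmb Fq C (g.val 0 0) - algebraMap (LaurentSeries Fq) C x * polyEmb Fq C (g.val 1 0) = 0
  · -- then determinant maps to zero
    have hb : algebraMap (LaurentSeries Fq) C x * polyEmb Fq C (g.val 1 1) - polyEmb Fq C (g.val 0 1) = 0 := by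
      linear_combination hx + z * hac
    have hdetC : polyEmb Fq C (g.val.det) = 0 := by
      rw [Matrix.det_fin_two, map_sub, _root_.map_mul, _root_.map_mul]
      linear_combination polyEmb Fq C (g.val 1 1) * hac + polyEmb Fq C (g.val 1 0) * hb
    exact polyEmb_ne hext (det_isUnit g).ne_zero hdetC
  · apply hzr
    refine ⟨(x * Polynomial.aeval (Tel Fq) (g.val 1 1) - Polynomial.aeval (Tel Fq) (g.val 0 1)) /
      (Polynomial.aeval (Tel Fq) (g.val 0 0) - x * Polynomial.aeval (Tel Fq) (g.val 1 0)), ?_⟩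
    rw [map_div₀, map_sub, _root_.map_mul, map_sub, _root_.map_mul]
    show (algebraMap (LaurentSeries Fq) C x * polyEmb Fq C (g.val 1 1) - polyEmb Fq C (g.val 0 1)) /
      (polyEmb Fq C (g.val 0 0) - algebraMap (LaurentSeries Fq) C x * polyEmb Fq C (g.val 1 0)) = z
    rw [div_eq_iff hac]
    linear_combination hx

lemma norm_polyEmb_det (hext : ∀ x : LaurentSeries Fq, ‖algebraMap (LaurentSeries Fq) C x‖ = absK Fq x)
    (g : GL (Fin 2) (Polynomial Fq)) : ‖polyEmb Fq C (g.val.det)‖ = 1 := by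
  obtain ⟨r, hr, hCr⟩ := Polynomial.isUnit_iff.mp (det_isUnit g)
  have hr0 : r ≠ 0 := hr.ne_zero
  rw [← hCr]
  have h1 : Polynomial.aeval (Tel Fq) (Polynomial.C r) = HahnSeries.single (0:ℤ) r := by
    rw [Polynomial.aeval_C, HahnSeries.algebraMap_apply']
    show HahnSeries.ofPowerSeries ℤ Fq (PowerSeries.C r) = _
    rw [HahnSeries.ofPowerSeries_C, HahnSeries.C_apply]
  rw [norm_polyEmb_eq hext, h1, absK,
    if_neg (by simpa [HahnSeries.single_eq_zero_iff] using hr0),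
    HahnSeries.order_single hr0]
  simp

lemma act_sub_act (hext : ∀ x : LaurentSeries Fq, ‖algebraMap (LaurentSeries Fq) C x‖ = absK Fq x)
    (g : GL (Fin 2) (Polynomial Fq)) {u v : C}
    (hu : u ∉ Set.range (algebraMap (LaurentSeries Fq) C))
    (hv : v ∉ Set.range (algebraMap (LaurentSeries Fq) C)) :
    act g u - act g v = polyEmb Fq C (g.val.det) * (u - v) /
      ((polyEmb Fq C (g.val 1 0) * u + polyEmb Fq C (g.val 1 1)) *
       (polyEmb Fq C (g.val 1 0) * v + polyEmb Fq C (g.val 1 1))) := by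
  have h1 := denom_ne hext g hu
  have h2 := denom_ne hext g hv
  rw [act, act, Matrix.det_fin_two, map_sub, _root_.map_mul, _root_.map_mul]
  rw [div_sub_div _ _ h1 h2]
  congr 1
  ring

end Aux

/-- **Inequality (5.4).**  Let `Γ ≤ GL₂(A)`, `α ∈ Γ`, `ω ∈ C` with `|ω|_i > 0`, `s ∈ K`.
If `κ' > 0` satisfies `|s - γ(αω)| ≥ κ' / |c·(αω) + d|` for all `γ = [[a,b],[c,d]] ∈ Γ`,
then for all `γ ∈ Γ` and `z ≠ γω`,
`|F_{γ,s}(z) - 1| ≤ |z - s|·|αω - ω| / (κ'·|z - γω|·|c·ω + d|)`. -/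
theorem F_gamma_bound {Fq : Type*} [Field Fq] [Fintype Fq]
    {C : Type*} [NormedField C] [Algebra (LaurentSeries Fq) C]
    (hna : ∀ x y : C, ‖x + y‖ ≤ max ‖x‖ ‖y‖)
    (hext : ∀ x : LaurentSeries Fq, ‖algebraMap (LaurentSeries Fq) C x‖ = absK Fq x)
    (Γ : Subgroup (GL (Fin 2) (Polynomial Fq))) (α : GL (Fin 2) (Polynomial Fq)) (hα : α ∈ Γ)
    (ω : C) (hω : 0 < imNorm Fq ω)
    (s : C) (hs : ∃ p r : Polynomial Fq, r ≠ 0 ∧ s = polyEmb Fq C p / polyEmb Fq C r)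
    (κ' : ℝ) (hκ' : 0 < κ')
    (hlow : ∀ γ ∈ Γ, κ' / ‖polyEmb Fq C (γ.val 1 0) * act α ω + polyEmb Fq C (γ.val 1 1)‖
      ≤ ‖s - act γ (act α ω)‖) :
    ∀ γ ∈ Γ, ∀ z : C, z ≠ act γ ω →
      ‖((s - act γ ω) * (z - act γ (act α ω))) /
          ((s - act γ (act α ω)) * (z - act γ ω)) - 1‖
        ≤ (‖z - s‖ * ‖act α ω - ω‖) /
            (κ' * ‖z - act γ ω‖ *
              ‖polyEmb Fq C (γ.val 1 0) * ω + polyEmb Fq C (γ.val 1 1)‖) := by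
  intro γ hγ z hz
  have hωr : ω ∉ Set.range (algebraMap (LaurentSeries Fq) C) := notMem_range_of_imNorm_pos hω
  have hαωr : act α ω ∉ Set.range (algebraMap (LaurentSeries Fq) C) := act_notMem_range hext α hω
  have hD1 : polyEmb Fq C (γ.val 1 0) * act α ω + polyEmb Fq C (γ.val 1 1) ≠ 0 :=
    denom_ne hext γ hαωr
  have hD2 : polyEmb Fq C (γ.val 1 0) * ω + polyEmb Fq C (γ.val 1 1) ≠ 0 :=
    denom_ne hext γ hωr
  have hzγ : z - act γ ω ≠ 0 := sub_ne_zero.mpr hz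
  have hD1n : 0 < ‖polyEmb Fq C (γ.val 1 0) * act α ω + polyEmb Fq C (γ.val 1 1)‖ :=
    norm_pos_iff.mpr hD1
  have hD2n : 0 < ‖polyEmb Fq C (γ.val 1 0) * ω + polyEmb Fq C (γ.val 1 1)‖ :=
    norm_pos_iff.mpr hD2
  have hsub := hlow γ hγ
  have hsn : 0 < ‖s - act γ (act α ω)‖ := lt_of_lt_of_le (div_pos hκ' hD1n) hsub
  have hsne : s - act γ (act α ω) ≠ 0 := norm_pos_iff.mp hsn
  have key : ((s - act γ ω) * (z - act γ (act α ω))) /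
      ((s - act γ (act α ω)) * (z - act γ ω)) - 1
      = ((z - s) * (act γ (act α ω) - act γ ω)) /
        ((s - act γ (act α ω)) * (z - act γ ω)) := by
    field_simp
    ring
  rw [key, act_sub_act hext γ hαωr hωr, norm_div, norm_mul, norm_div, norm_mul,
    norm_mul, norm_polyEmb_det hext γ, norm_mul, one_mul]
  have hzγn : 0 < ‖z - act γ ω‖ := norm_pos_iff.mpr hzγ
  have hκle : κ' ≤ ‖s - act γ (act α ω)‖ *
      ‖polyEmb Fq C (γ.val 1 0) * act α ω + polyEmb Fq C (γ.val 1 1)‖ :=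
    (div_le_iff₀ hD1n).mp hsub
  set A := ‖z - s‖
  set B := ‖act α ω - ω‖
  set d1 := ‖polyEmb Fq C (γ.val 1 0) * act α ω + polyEmb Fq C (γ.val 1 1)‖
  set d2 := ‖polyEmb Fq C (γ.val 1 0) * ω + polyEmb Fq C (γ.val 1 1)‖
  set n := ‖s - act γ (act α ω)‖
  set m := ‖z - act γ ω‖
  have e1 : A * (B / (d1 * d2)) / (n * m) = A * B / ((n * d1) * (m * d2)) := by
    rw [mul_div_assoc', div_div, show d1 * d2 * (n * m) = (n * d1) * (m * d2) by ring]
  have e2 : κ' * m * d2 = κ' * (m * d2) := by ring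
  rw [e1, e2]
  exact div_le_div_of_nonneg_left (by positivity) (by positivity)
    (mul_le_mul_of_nonneg_right hκle (by positivity))
end

section
/- Let Gamma be a subgroup of GL_2(A), alpha in Gamma, omega in C with |omega|_i > 0, s in K, zeta in C with |zeta| = |zeta|_i = 1, and z_n = s + T^{-n} * zeta for natural numbers n (so |z_n - s| = |z_n - s|_i = q^{-n}). Assume there is a constant C_0 > 0 such that |F_{gamma,s}(z) - 1| <= (|z - s| * C_0) / (|z - gamma omega| * |c*omega + d|) for all gamma = [[a,b],[c,d]] in Gamma and all z in C with |z|_i > 0 and z ≠ gamma omega, and assume there is kappa > 0 with |s - gamma omega| >= kappa / |c*omega + d| for every gamma = [[a,b],[c,d]] in Gamma. Then for every epsilon > 0 there exists a natural number n_1 such that for all n >= n_1 and all gamma in Gamma: if |gamma omega|_i > q^{-n}, then z_n ≠ gamma omega and |F_{gamma,s}(z_n) - 1| <= epsilon. (Lemma 5.4 of the paper.) -/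
open Polynomial Matrix
open scoped Classical

lemma na_add_eq {C : Type*} [NormedField C]
    (hna : ∀ x y : C, ‖x + y‖ ≤ max ‖x‖ ‖y‖) {a b : C} (h : ‖b‖ < ‖a‖) :
    ‖a + b‖ = ‖a‖ := by
  refine le_antisymm ((hna a b).trans_eq (max_eq_left h.le)) ?_
  by_contra hlt
  push_neg at hlt
  have h2 : ‖a‖ ≤ max ‖a + b‖ ‖-b‖ := by
    have := hna (a + b) (-b); simpa using this
  rw [norm_neg] at h2
  exact absurd h2 (not_le.mpr (max_lt hlt h))

lemma imNorm_bdd (Fq : Type*) [Field Fq] {C : Type*} [NormedField C]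
    [Algebra (LaurentSeries Fq) C] (z : C) :
    BddBelow (Set.range fun x : LaurentSeries Fq => ‖z - algebraMap (LaurentSeries Fq) C x‖) :=
  ⟨0, by rintro y ⟨x, rfl⟩; exact norm_nonneg _⟩

lemma imNorm_le (Fq : Type*) [Field Fq] {C : Type*} [NormedField C]
    [Algebra (LaurentSeries Fq) C] (z : C) (x : LaurentSeries Fq) :
    imNorm Fq z ≤ ‖z - algebraMap (LaurentSeries Fq) C x‖ :=
  ciInf_le (imNorm_bdd Fq z) x

/-- **Lemma 5.4.**  With `z_n = s + T^{-n}·ζ` (`|ζ| = |ζ|_i = 1`), if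
`|F_{γ,s}(z) - 1| ≤ |z - s|·C₀ / (|z - γω|·|c·ω + d|)` holds for all `γ ∈ Γ` and all
`z` with `|z|_i > 0`, `z ≠ γω`, and if `κ > 0` satisfies `|s - γω| ≥ κ / |c·ω + d|`
for all `γ ∈ Γ`, then for every `ε > 0` there is `n₁` such that for all
`n ≥ n₁` and all `γ ∈ Γ` with `|γω|_i > q^{-n}` one has `z_n ≠ γω` and
`|F_{γ,s}(z_n) - 1| ≤ ε`. -/
theorem F_gamma_large_imaginary {Fq : Type*} [Field Fq] [Fintype Fq]
    {C : Type*} [NormedField C] [Algebra (LaurentSeries Fq) C]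
    (hna : ∀ x y : C, ‖x + y‖ ≤ max ‖x‖ ‖y‖)
    (hext : ∀ x : LaurentSeries Fq, ‖algebraMap (LaurentSeries Fq) C x‖ = absK Fq x)
    (Γ : Subgroup (GL (Fin 2) (Polynomial Fq))) (α : GL (Fin 2) (Polynomial Fq)) (hα : α ∈ Γ)
    (ω : C) (hω : 0 < imNorm Fq ω)
    (s : C) (hs : ∃ p r : Polynomial Fq, r ≠ 0 ∧ s = polyEmb Fq C p / polyEmb Fq C r)
    (ζ : C) (hζ : ‖ζ‖ = 1) (hζi : imNorm Fq ζ = 1)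
    (zseq : ℕ → C) (hz : ∀ n : ℕ, zseq n = s + (polyEmb Fq C Polynomial.X)⁻¹ ^ n * ζ)
    (C₀ : ℝ) (hC₀ : 0 < C₀)
    (hbd : ∀ γ ∈ Γ, ∀ z : C, 0 < imNorm Fq z → z ≠ act γ ω →
      ‖((s - act γ ω) * (z - act γ (act α ω))) /
          ((s - act γ (act α ω)) * (z - act γ ω)) - 1‖
        ≤ ‖z - s‖ * C₀ /
            (‖z - act γ ω‖ * ‖polyEmb Fq C (γ.val 1 0) * ω + polyEmb Fq C (γ.val 1 1)‖))
    (κ : ℝ) (hκ : 0 < κ)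
    (hlow : ∀ γ ∈ Γ, κ / ‖polyEmb Fq C (γ.val 1 0) * ω + polyEmb Fq C (γ.val 1 1)‖
      ≤ ‖s - act γ ω‖) :
    ∀ ε : ℝ, 0 < ε → ∃ n₁ : ℕ, ∀ n ≥ n₁, ∀ γ ∈ Γ,
      (Fintype.card Fq : ℝ) ^ (-(n : ℤ)) < imNorm Fq (act γ ω) →
      zseq n ≠ act γ ω ∧
      ‖((s - act γ ω) * (zseq n - act γ (act α ω))) /
          ((s - act γ (act α ω)) * (zseq n - act γ ω)) - 1‖ ≤ ε := by
  intro ε hε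
  set q : ℝ := (Fintype.card Fq : ℝ) with hqdef
  have hq1 : (1 : ℝ) < q := by
    rw [hqdef]; exact_mod_cast Fintype.one_lt_card (α := Fq)
  have hq0 : (0 : ℝ) < q := lt_trans one_pos hq1
  -- T basics
  have hTne : Tel Fq ≠ 0 := HahnSeries.single_ne_zero one_ne_zero
  have hTnorm : ‖algebraMap (LaurentSeries Fq) C (Tel Fq)‖ = q := by
    rw [hext]
    unfold absK
    rw [if_neg hTne, Tel, HahnSeries.order_single one_ne_zero]
    norm_num
    exact hqdef.symm
  have hX : polyEmb Fq C Polynomial.X = algebraMap (LaurentSeries Fq) C (Tel Fq) := by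
    simp [polyEmb]
  -- s is in the image of K_∞
  obtain ⟨p, r, hr, hsval⟩ := hs
  set S : LaurentSeries Fq := Polynomial.aeval (Tel Fq) p / Polynomial.aeval (Tel Fq) r with hSdef
  have hS : s = algebraMap (LaurentSeries Fq) C S := by
    rw [hsval, hSdef, map_div₀]
    simp [polyEmb]
  -- norm of z_n - s
  have hzs : ∀ n : ℕ, zseq n - s = algebraMap (LaurentSeries Fq) C ((Tel Fq)⁻¹ ^ n) * ζ := by
    intro n
    rw [hz n, hX, ← map_inv₀, ← map_pow]
    ring
  have hzsnorm : ∀ n : ℕ, ‖zseq n - s‖ = q⁻¹ ^ n := by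
    intro n
    rw [hzs n, norm_mul, hζ, mul_one, map_pow, map_inv₀, norm_pow, norm_inv, hTnorm]
  -- lower bound on imNorm ζ terms
  have hζterm : ∀ x : LaurentSeries Fq, (1 : ℝ) ≤ ‖ζ - algebraMap (LaurentSeries Fq) C x‖ := by
    intro x
    rw [← hζi]
    exact imNorm_le Fq ζ x
  -- imNorm (zseq n) ≥ q⁻¹^n
  have himlow : ∀ n : ℕ, q⁻¹ ^ n ≤ imNorm Fq (zseq n) := by
    intro n
    apply le_ciInf
    intro x
    have hdecomp : zseq n - algebraMap (LaurentSeries Fq) C x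
        = algebraMap (LaurentSeries Fq) C ((Tel Fq)⁻¹ ^ n) *
            (ζ - algebraMap (LaurentSeries Fq) C (-(Tel Fq ^ n * (S - x)))) := by
      have h1 : zseq n - algebraMap (LaurentSeries Fq) C x
          = (zseq n - s) + algebraMap (LaurentSeries Fq) C (S - x) := by
        rw [map_sub, hS]; ring
      rw [h1, hzs n]
      rw [mul_sub, ← _root_.map_mul]
      have : (Tel Fq)⁻¹ ^ n * -(Tel Fq ^ n * (S - x)) = -(S - x) := by
        rw [mul_neg, ← mul_assoc, inv_pow, inv_mul_cancel₀ (pow_ne_zero n hTne), one_mul]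
      rw [this, map_neg, sub_neg_eq_add]
    rw [hdecomp, norm_mul, map_pow, map_inv₀, norm_pow, norm_inv, hTnorm]
    have h2 := hζterm (-(Tel Fq ^ n * (S - x)))
    calc q⁻¹ ^ n = q⁻¹ ^ n * 1 := (mul_one _).symm
      _ ≤ q⁻¹ ^ n * ‖ζ - algebraMap (LaurentSeries Fq) C (-(Tel Fq ^ n * (S - x)))‖ := by
          apply mul_le_mul_of_nonneg_left h2 (by positivity)
  -- choose n₁
  have hqi1 : q⁻¹ < 1 := inv_lt_one_of_one_lt₀ hq1
  have hqi0 : (0 : ℝ) ≤ q⁻¹ := by positivity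
  obtain ⟨n₁, hn₁⟩ := exists_pow_lt_of_lt_one (show (0:ℝ) < ε * κ / C₀ by positivity) hqi1
  refine ⟨n₁, ?_⟩
  intro n hn γ hγ him
  -- convert the power
  have hpow : (Fintype.card Fq : ℝ) ^ (-(n : ℤ)) = q⁻¹ ^ n := by
    show q ^ (-(n : ℤ)) = q⁻¹ ^ n
    rw [_root_.zpow_neg, zpow_natCast, inv_pow]
  rw [hpow] at him
  -- |s - γω| > q⁻¹^n
  have hsg : q⁻¹ ^ n < ‖s - act γ ω‖ := by
    refine lt_of_lt_of_le him ?_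
    calc imNorm Fq (act γ ω) ≤ ‖act γ ω - algebraMap (LaurentSeries Fq) C S‖ :=
          imNorm_le Fq _ S
      _ = ‖s - act γ ω‖ := by rw [← hS, norm_sub_rev]
  -- |z_n - γω| = |s - γω|
  have heq : ‖zseq n - act γ ω‖ = ‖s - act γ ω‖ := by
    have hd : zseq n - act γ ω = (s - act γ ω) + (zseq n - s) := by ring
    rw [hd, na_add_eq hna]
    rw [hzsnorm n]; exact hsg
  have hsgpos : 0 < ‖s - act γ ω‖ := lt_of_le_of_lt (by positivity) hsg
  have hne : zseq n ≠ act γ ω := by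
    intro h
    rw [h, sub_self, norm_zero] at heq
    exact hsgpos.ne heq
  refine ⟨hne, ?_⟩
  have himpos : 0 < imNorm Fq (zseq n) := lt_of_lt_of_le (by positivity) (himlow n)
  have hb := hbd γ hγ (zseq n) himpos hne
  have hqn : q⁻¹ ^ n ≤ q⁻¹ ^ n₁ := pow_le_pow_of_le_one hqi0 hqi1.le hn
  have hfin : q⁻¹ ^ n * C₀ / κ ≤ ε := by
    rw [div_le_iff₀ hκ]
    have h3 : q⁻¹ ^ n < ε * κ / C₀ := lt_of_le_of_lt hqn hn₁
    have h4 : q⁻¹ ^ n * C₀ < ε * κ / C₀ * C₀ := by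
      exact mul_lt_mul_of_pos_right h3 hC₀
    rw [div_mul_cancel₀ _ hC₀.ne'] at h4
    exact h4.le
  rcases eq_or_lt_of_le (norm_nonneg (polyEmb Fq C (γ.val 1 0) * ω + polyEmb Fq C (γ.val 1 1)))
    with hD0 | hDpos
  · rw [← hD0, mul_zero, div_zero] at hb
    exact hb.trans hε.le
  · have hκD : κ ≤ ‖s - act γ ω‖ * ‖polyEmb Fq C (γ.val 1 0) * ω + polyEmb Fq C (γ.val 1 1)‖ :=
      (div_le_iff₀ hDpos).mp (hlow γ hγ)
    calc ‖((s - act γ ω) * (zseq n - act γ (act α ω))) /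
          ((s - act γ (act α ω)) * (zseq n - act γ ω)) - 1‖
        ≤ ‖zseq n - s‖ * C₀ / (‖zseq n - act γ ω‖ *
            ‖polyEmb Fq C (γ.val 1 0) * ω + polyEmb Fq C (γ.val 1 1)‖) := hb
      _ = q⁻¹ ^ n * C₀ / (‖s - act γ ω‖ *
            ‖polyEmb Fq C (γ.val 1 0) * ω + polyEmb Fq C (γ.val 1 1)‖) := by
          rw [hzsnorm n, heq]
      _ ≤ q⁻¹ ^ n * C₀ / κ := div_le_div_of_nonneg_left (by positivity) hκ hκD
      _ ≤ ε := hfin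
end

section
/- Let n in A be a nonconstant polynomial and let P in A be monic irreducible with P ≡ 1 (mod n). Then for every point s of the projective line P^1(K): (i) there exists Q in Gamma_0(n) with Q·s = [[P,0],[0,1]]·s, i.e. P*s is Gamma_0(n)-equivalent to s; and (ii) for every j in A with deg j < deg P there exists Q_j in Gamma_0(n) with Q_j·s = [[1,j],[0,P]]·s, i.e. (s+j)/P is Gamma_0(n)-equivalent to s. (This is the key claim in the proof of Theorem 7.3 of the paper.) -/
set_option synthInstance.maxHeartbeats 400000
set_option maxHeartbeats 1000000
open Polynomial Matrix

namespace Gamma0HeckeAux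

lemma mulVec_fin_two' {R : Type*} [CommRing R] (p q r s x y : R) :
    (!![p, q; r, s]).mulVec ![x, y] = ![p*x + q*y, r*x + s*y] := by
  funext i; fin_cases i <;> simp [Matrix.mulVec, dotProduct, Fin.sum_univ_two]

lemma vec2_eq {R : Type*} {x y x' y' : R} (h0 : x = x') (h1 : y = y') :
    ![x, y] = ![x', y'] := by rw [h0, h1]

variable {Fq : Type*} [Field Fq]

local notation "φ" => algebraMap (Polynomial Fq) (RatFunc Fq)

lemma map_mulVec' (Q : Matrix (Fin 2) (Fin 2) (Polynomial Fq)) (w : Fin 2 → Polynomial Fq) :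
    (Q.map φ).mulVec (fun i => φ (w i)) = fun i => φ (Q.mulVec w i) := by
  funext i
  simp [Matrix.mulVec, dotProduct, Fin.sum_univ_two, Matrix.map_apply]

lemma comp_vec2 (x y : Polynomial Fq) :
    (fun i => φ (![x, y] i)) = ![φ x, φ y] := by
  funext i; fin_cases i <;> simp

lemma bridge {Q : Matrix (Fin 2) (Fin 2) (Polynomial Fq)}
    {M : Matrix (Fin 2) (Fin 2) (RatFunc Fq)} {v w : Fin 2 → RatFunc Fq} {μ : RatFunc Fq}
    (hvw : v = μ • w)
    (h : ∃ l : RatFunc Fq, l ≠ 0 ∧ (Q.map φ).mulVec w = l • M.mulVec w) :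
    ∃ l : RatFunc Fq, l ≠ 0 ∧ (Q.map φ).mulVec v = l • M.mulVec v := by
  obtain ⟨l, hl, he⟩ := h
  refine ⟨l, hl, ?_⟩
  subst hvw
  rw [Matrix.mulVec_smul, he, Matrix.mulVec_smul, smul_comm]

lemma exists_rep (v : Fin 2 → RatFunc Fq) (hv : v ≠ 0) :
    ∃ (a c : Polynomial Fq) (μ : RatFunc Fq), μ ≠ 0 ∧ IsCoprime a c ∧
      v = μ • (fun i => φ (![a, c] i)) := by
  classical
  by_cases h1 : v 1 = 0
  · have h0 : v 0 ≠ 0 := by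
      intro h0
      apply hv
      funext i; fin_cases i <;> assumption
    refine ⟨1, 0, v 0, h0, isCoprime_one_left, ?_⟩
    funext i; fin_cases i <;> simp [h1]
  · set A0 : Polynomial Fq := (v 0).num * (v 1).denom with hA0
    set C0 : Polynomial Fq := (v 1).num * (v 0).denom with hC0
    set D : Polynomial Fq := (v 0).denom * (v 1).denom with hD
    have hC0ne : C0 ≠ 0 :=
      mul_ne_zero (RatFunc.num_ne_zero h1) (RatFunc.denom_ne_zero _)
    have hDne : D ≠ 0 := mul_ne_zero (RatFunc.denom_ne_zero _) (RatFunc.denom_ne_zero _)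
    set g : Polynomial Fq := GCDMonoid.gcd A0 C0 with hg
    have hgne : g ≠ 0 := gcd_ne_zero_of_right hC0ne
    have hco : IsCoprime (A0 / g) (C0 / g) := isCoprime_div_gcd_div_gcd hC0ne
    have hφD : φ D ≠ 0 := RatFunc.algebraMap_ne_zero hDne
    have hφg : φ g ≠ 0 := RatFunc.algebraMap_ne_zero hgne
    have hAg : g * (A0 / g) = A0 :=
      EuclideanDomain.mul_div_cancel' hgne (gcd_dvd_left A0 C0)
    have hCg : g * (C0 / g) = C0 :=
      EuclideanDomain.mul_div_cancel' hgne (gcd_dvd_right A0 C0)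
    have key : ∀ x : RatFunc Fq, x * φ x.denom = φ x.num := fun x => by
      nth_rewrite 1 [← RatFunc.num_div_denom x]
      exact div_mul_cancel₀ _ (RatFunc.algebraMap_ne_zero (RatFunc.denom_ne_zero x))
    have h0D : v 0 * φ D = φ A0 := by
      rw [hD, hA0, _root_.map_mul, _root_.map_mul, ← mul_assoc, key]
    have h1D : v 1 * φ D = φ C0 := by
      rw [hD, hC0, _root_.map_mul, _root_.map_mul,
        mul_comm ((algebraMap (Polynomial Fq) (RatFunc Fq)) (v 0).denom), ← mul_assoc, key]
    refine ⟨A0 / g, C0 / g, φ g / φ D, div_ne_zero hφg hφD, hco, ?_⟩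
    funext i; fin_cases i
    · show v 0 = φ g / φ D * φ (A0 / g)
      rw [div_mul_eq_mul_div, ← _root_.map_mul, hAg, eq_div_iff hφD, h0D]
    · show v 1 = φ g / φ D * φ (C0 / g)
      rw [div_mul_eq_mul_div, ← _root_.map_mul, hCg, eq_div_iff hφD, h1D]

lemma core1 (n P : Polynomial Fq) (hP0 : P ≠ 0) (hPirr : Irreducible P)
    (m : Polynomial Fq) (hm : P - 1 = n * m) (a c : Polynomial Fq) (hac : IsCoprime a c) :
    ∃ Q : Matrix (Fin 2) (Fin 2) (Polynomial Fq),
      (∃ u : Fq, u ≠ 0 ∧ Q.det = Polynomial.C u) ∧ n ∣ Q 1 0 ∧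
      ∃ l : RatFunc Fq, l ≠ 0 ∧
        (Q.map φ).mulVec (fun i => φ (![a, c] i))
          = l • (!![φ P, 0; 0, 1]).mulVec (fun i => φ (![a, c] i)) := by
  have hφP : φ P ≠ 0 := RatFunc.algebraMap_ne_zero hP0
  by_cases hPc : P ∣ c
  · -- Case B : P ∣ c ; target is (a, c/P), l = (φ P)⁻¹
    obtain ⟨c₁, hc1⟩ := hPc
    obtain ⟨u1, u2, hu⟩ := hac
    refine ⟨!![P + n*a*(-(m*u1)), a*(-(n*m*u2));
               n*(c₁*(-(m*u1))), 1 + c₁*(-(n*m*u2))], ⟨1, one_ne_zero, ?_⟩,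
           ⟨c₁*(-(m*u1)), ?_⟩, (φ P)⁻¹, inv_ne_zero hφP, ?_⟩
    · rw [Matrix.det_fin_two_of, Polynomial.C_1]
      linear_combination (-(n*m))*hu + hm + (n*m*u2)*hc1
    · simp
    · have hrow : (!![P + n*a*(-(m*u1)), a*(-(n*m*u2));
               n*(c₁*(-(m*u1))), 1 + c₁*(-(n*m*u2))]).mulVec ![a, c] = ![a, c₁] := by
        rw [mulVec_fin_two']
        exact vec2_eq (by linear_combination (-(n*m*a))*hu + a*hm)
          (by linear_combination (-(n*m*c₁))*hu + c₁*hm + hc1)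
      have hM : (!![φ P, 0; 0, 1]).mulVec ![φ a, φ c]
          = ![φ (P*a), φ (P*c₁)] := by
        rw [mulVec_fin_two']
        exact vec2_eq (by rw [_root_.map_mul]; ring)
          (by rw [← hc1]; ring)
      rw [map_mulVec', hrow, comp_vec2 a c₁, comp_vec2 a c, hM]
      funext i; fin_cases i <;>
        simp [_root_.map_mul, inv_mul_cancel_left₀ hφP]
  · -- Case A : ¬ P ∣ c ; l = 1
    have hcP : IsCoprime c P := (hPirr.coprime_iff_not_dvd.mpr hPc).symm
    obtain ⟨u1, u2, hu⟩ := hac.symm.mul_right hcP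
    -- hu : u1 * c + u2 * (a * P) = 1
    refine ⟨!![P + c*(-(n*m*u1)), -(a*(-(n*m*u1)));
               c*(n*(m*u2)), 1 - a*(n*(m*u2))], ⟨1, one_ne_zero, ?_⟩,
           ⟨c*(m*u2), ?_⟩, 1, one_ne_zero, ?_⟩
    · rw [Matrix.det_fin_two_of, Polynomial.C_1]
      linear_combination (-(n*m))*hu + hm
    · simp; ring
    · have hrow : (!![P + c*(-(n*m*u1)), -(a*(-(n*m*u1)));
               c*(n*(m*u2)), 1 - a*(n*(m*u2))]).mulVec ![a, c] = ![P*a, c] := by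
        rw [mulVec_fin_two']
        exact vec2_eq (by ring) (by ring)
      have hM : (!![φ P, 0; 0, 1]).mulVec ![φ a, φ c]
          = ![φ (P*a), φ c] := by
        rw [mulVec_fin_two']
        exact vec2_eq (by rw [_root_.map_mul]; ring) (by ring)
      rw [map_mulVec', hrow, comp_vec2 (P*a) c, comp_vec2 a c, hM, one_smul]

lemma core2 (n P : Polynomial Fq) (hP0 : P ≠ 0) (hPirr : Irreducible P)
    (m : Polynomial Fq) (hm : P - 1 = n * m) (a c : Polynomial Fq) (hac : IsCoprime a c)
    (j : Polynomial Fq) :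
    ∃ Q : Matrix (Fin 2) (Fin 2) (Polynomial Fq),
      (∃ u : Fq, u ≠ 0 ∧ Q.det = Polynomial.C u) ∧ n ∣ Q 1 0 ∧
      ∃ l : RatFunc Fq, l ≠ 0 ∧
        (Q.map φ).mulVec (fun i => φ (![a, c] i))
          = l • (!![1, φ j; 0, φ P]).mulVec (fun i => φ (![a, c] i)) := by
  have hφP : φ P ≠ 0 := RatFunc.algebraMap_ne_zero hP0
  by_cases hPd : P ∣ (a + j*c)
  · -- Case B : P ∣ a + j*c ; target is ((a+jc)/P, c), l = (φ P)⁻¹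
    obtain ⟨a₁, ha1⟩ := hPd
    obtain ⟨σ, τ, hu⟩ := hac
    refine ⟨!![σ*a₁ + c*(τ - σ*j), τ*a₁ - a*(τ - σ*j);
               c*(n*(-(σ*m))), 1 - a*(n*(-(σ*m)))], ⟨1, one_ne_zero, ?_⟩,
           ⟨c*(-(σ*m)), ?_⟩, (φ P)⁻¹, inv_ne_zero hφP, ?_⟩
    · rw [Matrix.det_fin_two_of, Polynomial.C_1]
      linear_combination (1 + n*σ*m*a₁)*hu + (-(σ*a₁))*hm + (-σ)*ha1
    · simp; ring
    · have hrow : (!![σ*a₁ + c*(τ - σ*j), τ*a₁ - a*(τ - σ*j);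
               c*(n*(-(σ*m))), 1 - a*(n*(-(σ*m)))]).mulVec ![a, c] = ![a₁, c] := by
        rw [mulVec_fin_two']
        exact vec2_eq (by linear_combination a₁*hu) (by ring)
      have hM : (!![(1 : RatFunc Fq), φ j; 0, φ P]).mulVec ![φ a, φ c]
          = ![φ (P*a₁), φ (P*c)] := by
        rw [mulVec_fin_two']
        refine vec2_eq ?_ (by rw [_root_.map_mul]; ring)
        rw [← ha1, _root_.map_add, _root_.map_mul]; ring
      rw [map_mulVec', hrow, comp_vec2 a₁ c, comp_vec2 a c, hM]
      funext i; fin_cases i <;>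
        simp [_root_.map_mul, inv_mul_cancel_left₀ hφP]
  · -- Case A : ¬ P ∣ a + j*c ; l = 1
    have hco1 : IsCoprime (a + j*c) c := by
      have := hac.add_mul_left_left j
      rwa [mul_comm c j] at this
    have hcoP : IsCoprime (a + j*c) P := (hPirr.coprime_iff_not_dvd.mpr hPd).symm
    obtain ⟨u1, u2, hu⟩ := hcoP.mul_right hco1
    -- hu : u1 * (a + j*c) + u2 * (P * c) = 1
    refine ⟨!![1 + c*(-(n*m*u2)), j - a*(-(n*m*u2));
               c*(n*(u1*m)), P - a*(n*(u1*m))], ⟨1, one_ne_zero, ?_⟩,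
           ⟨c*(u1*m), ?_⟩, 1, one_ne_zero, ?_⟩
    · rw [Matrix.det_fin_two_of, Polynomial.C_1]
      linear_combination (-(n*m))*hu + hm
    · simp; ring
    · have hrow : (!![1 + c*(-(n*m*u2)), j - a*(-(n*m*u2));
               c*(n*(u1*m)), P - a*(n*(u1*m))]).mulVec ![a, c] = ![a + j*c, P*c] := by
        rw [mulVec_fin_two']
        exact vec2_eq (by ring) (by ring)
      have hM : (!![(1 : RatFunc Fq), φ j; 0, φ P]).mulVec ![φ a, φ c]
          = ![φ (a + j*c), φ (P*c)] := by
        rw [mulVec_fin_two']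
        exact vec2_eq (by rw [_root_.map_add, _root_.map_mul]; ring)
          (by rw [_root_.map_mul]; ring)
      rw [map_mulVec', hrow, comp_vec2 (a + j*c) (P*c), comp_vec2 a c, hM, one_smul]

end Gamma0HeckeAux

open Gamma0HeckeAux in
/-- **Key claim in the proof of Theorem 7.3.**  Let `n ∈ A = F_q[T]` be nonconstant and
`P ∈ A` monic irreducible with `P ≡ 1 (mod n)`.  Points of `P¹(K)` are represented by
nonzero vectors `v : Fin 2 → K` up to scaling, and a matrix acts through `mulVec` after
mapping its entries into `K = F_q(T)`.  Then for every point `s` of `P¹(K)`: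
(i) there is `Q ∈ Γ₀(n)` with `Q·s = [[P,0],[0,1]]·s`, and
(ii) for every `j ∈ A` with `deg j < deg P` there is `Q_j ∈ Γ₀(n)` with
`Q_j·s = [[1,j],[0,P]]·s`. -/
theorem gamma0_equivalence_of_hecke_translates {Fq : Type*} [Field Fq] [Fintype Fq]
    (n P : Polynomial Fq) (hn : 0 < n.degree) (hP : P.Monic) (hPirr : Irreducible P)
    (hcong : n ∣ P - 1)
    (v : Fin 2 → RatFunc Fq) (hv : v ≠ 0) :
    (∃ Q : Matrix (Fin 2) (Fin 2) (Polynomial Fq),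
      (∃ u : Fq, u ≠ 0 ∧ Q.det = Polynomial.C u) ∧ n ∣ Q 1 0 ∧
      ∃ l : RatFunc Fq, l ≠ 0 ∧
        (Q.map (algebraMap (Polynomial Fq) (RatFunc Fq))).mulVec v
          = l • (!![algebraMap (Polynomial Fq) (RatFunc Fq) P, 0; 0, 1]).mulVec v) ∧
    (∀ j : Polynomial Fq, j.degree < P.degree →
      ∃ Q : Matrix (Fin 2) (Fin 2) (Polynomial Fq),
        (∃ u : Fq, u ≠ 0 ∧ Q.det = Polynomial.C u) ∧ n ∣ Q 1 0 ∧
        ∃ l : RatFunc Fq, l ≠ 0 ∧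
          (Q.map (algebraMap (Polynomial Fq) (RatFunc Fq))).mulVec v
            = l • (!![1, algebraMap (Polynomial Fq) (RatFunc Fq) j;
                      0, algebraMap (Polynomial Fq) (RatFunc Fq) P]).mulVec v) := by
  obtain ⟨m, hm⟩ := hcong
  obtain ⟨a, c, μ, hμ, hac, hrep⟩ := exists_rep v hv
  constructor
  · obtain ⟨Q, hdet, hdvd, l, hl, he⟩ := core1 n P hP.ne_zero hPirr m hm a c hac
    exact ⟨Q, hdet, hdvd, bridge hrep ⟨l, hl, he⟩⟩
  · intro j _
    obtain ⟨Q, hdet, hdvd, l, hl, he⟩ := core2 n P hP.ne_zero hPirr m hm a c hac j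
    exact ⟨Q, hdet, hdvd, bridge hrep ⟨l, hl, he⟩⟩
end
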